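/- For any integers g ≥ 3, d ≥ 2 and any even integer n ≥ 4d^g, there exists an n-vertex d-regular graph with girth at least g. -/

import Mathlib

/-!
Erdős–Sachs construction. Starting from an `r`-regular graph `G` of girth at least `g`, raise all
degrees to `r + 1` two vertices at a time, keeping `G ≤ H`, girth at least `g` and maximum degree
at most `r + 1`; since `n` is even, the deficient vertices (degree `r`) come in pairs. If two
deficient vertices `x`, `y` are at distance at least `g - 1`, join them. Otherwise every deficient
vertex lies within distance `g - 2` of `x`, and that ball has fewer than `d ^ (g - 1)` vertices.
The graph `H \ G` is a perfect matching of the saturated vertices, so, as `n ≥ 4 d ^ g`, one of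
its edges `ab` lies at distance at least `g - 1` from both `x` and `y`. Replacing `ab` by `xa` and
`yb` keeps the girth: a path from `a` to `b` avoiding `ab` closes a cycle with `ab`, so it is long.
-/

open scoped Finset

namespace SimpleGraph

variable {V : Type*} {H : SimpleGraph V} {u v y b : V}

lemma Walk.edges_subset_of_notMem_sup_edge (p : (H ⊔ edge u v).Walk y b)
    (hp : s(u, v) ∉ p.edges) : ∀ e ∈ p.edges, e ∈ H.edgeSet := by
  intro e he
  have h := p.edges_subset_edgeSet he
  rw [edgeSet_sup, Set.mem_union] at h
  refine h.resolve_right fun h' => hp ?_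
  rwa [Set.mem_singleton_iff.mp (edgeSet_edge_subset h')] at he

lemma Walk.IsTrail.exists_split_sup_edge {p : (H ⊔ edge u v).Walk y b} (hp : p.IsTrail)
    (he : s(u, v) ∈ p.edges) :
    ∃ s t, s(s, t) = s(u, v) ∧ ∃ (q₁ : H.Walk y s) (q₂ : H.Walk t b),
      q₁.length + 1 + q₂.length = p.length := by
  have split : ∀ {s t} (h : (H ⊔ edge u v).Adj s t), s(s, t) = s(u, v) →
      h.toWalk.IsSubwalk p → ∃ (q₁ : H.Walk y s) (q₂ : H.Walk t b),
        q₁.length + 1 + q₂.length = p.length := by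
    rintro s t h hst ⟨r₁, r₂, rfl⟩
    have hnd := hp.edges_nodup
    simp only [edges_append, edges_cons, edges_nil, hst] at hnd
    simp only [List.nodup_append, List.mem_append, List.mem_cons, List.not_mem_nil] at hnd
    refine ⟨r₁.transfer H (r₁.edges_subset_of_notMem_sup_edge fun h => ?_),
      r₂.transfer H (r₂.edges_subset_of_notMem_sup_edge fun h => ?_), ?_⟩
    · exact hnd.1.2.2 _ h _ (Or.inl rfl) rfl
    · exact hnd.2.2 _ (Or.inr (Or.inl rfl)) _ h rfl
    · simp [length_transfer, length_append]
  have hadj := p.adj_of_mem_edges he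
  rcases (isSubwalk_toWalk_iff_mem_edges hadj).mpr he with h | h
  · exact ⟨u, v, rfl, split hadj rfl h⟩
  · exact ⟨v, u, Sym2.eq_swap, split hadj.symm Sym2.eq_swap h⟩

lemma Reachable.exists_path_length_eq_edist {G : SimpleGraph V} (hr : G.Reachable u v) :
    ∃ p : G.Walk u v, p.IsPath ∧ p.length = G.edist u v := by
  obtain ⟨p, hp, hlen⟩ := hr.exists_path_of_dist
  exact ⟨p, hp, by rw [hlen, hr.coe_dist_eq_edist]⟩

lemma min_egirth_edist_le_egirth_sup_edge :
    min H.egirth (H.edist u v + 1) ≤ (H ⊔ edge u v).egirth := by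
  refine le_egirth.mpr fun a c hc => ?_
  by_cases he : s(u, v) ∈ c.edges
  · obtain ⟨s, t, hst, q₁, q₂, hlen⟩ := hc.isTrail.exists_split_sup_edge he
    have hts : H.edist u v = H.edist t s := by
      rcases Sym2.eq_iff.mp hst with ⟨rfl, rfl⟩ | ⟨rfl, rfl⟩
      · exact edist_comm
      · rfl
    calc min H.egirth (H.edist u v + 1) ≤ H.edist t s + 1 := hts ▸ min_le_right _ _
      _ ≤ (q₂.append q₁).length + 1 := by gcongr; exact edist_le _
      _ = c.length := by rw [Walk.length_append, ← hlen]; push_cast; ring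
  · have hsub := c.edges_subset_of_notMem_sup_edge he
    calc min H.egirth (H.edist u v + 1) ≤ H.egirth := min_le_left _ _
      _ ≤ (c.transfer H hsub).length := egirth_le_length (hc.transfer hsub)
      _ = c.length := by rw [Walk.length_transfer]

lemma min_edist_le_edist_sup_edge :
    min (H.edist y b) (min (H.edist y u + 1 + H.edist v b) (H.edist y v + 1 + H.edist u b)) ≤
      (H ⊔ edge u v).edist y b := by
  by_cases hr : (H ⊔ edge u v).Reachable y b
  · obtain ⟨p, hp, hlen⟩ := hr.exists_path_length_eq_edist
    rw [← hlen]
    by_cases he : s(u, v) ∈ p.edges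
    · obtain ⟨s, t, hst, q₁, q₂, hlen⟩ := hp.isTrail.exists_split_sup_edge he
      rw [← hlen]
      push_cast
      rcases Sym2.eq_iff.mp hst with ⟨rfl, rfl⟩ | ⟨rfl, rfl⟩
      · exact min_le_of_right_le <| min_le_of_left_le <| by gcongr <;> exact edist_le _
      · exact min_le_of_right_le <| min_le_of_right_le <| by gcongr <;> exact edist_le _
    · have hsub := p.edges_subset_of_notMem_sup_edge he
      exact min_le_of_left_le <| (Walk.length_transfer _ hsub) ▸ edist_le (p.transfer H hsub)
  · simp [edist_eq_top_of_not_reachable hr]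

lemma egirth_le_edist_sdiff_edge_add_one {a b : V} (hab : H.Adj a b) :
    H.egirth ≤ (H \ edge a b).edist a b + 1 := by
  by_cases hr : (H \ edge a b).Reachable a b
  · obtain ⟨p, hp, hlen⟩ := hr.exists_path_length_eq_edist
    have hsub : ∀ e ∈ p.edges, e ∈ H.edgeSet := fun e he =>
      edgeSet_mono sdiff_le (p.edges_subset_edgeSet he)
    have hab' : s(b, a) ∉ (p.transfer H hsub).edges := by
      rw [Walk.edges_transfer, Sym2.eq_swap]
      intro he
      simpa using p.edges_subset_edgeSet he
    have hc := (Walk.cons_isCycle_iff _ hab.symm).mpr ⟨hp.transfer hsub, hab'⟩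
    calc H.egirth ≤ (Walk.cons hab.symm (p.transfer H hsub)).length := egirth_le_length hc
      _ = (H \ edge a b).edist a b + 1 := by
        rw [Walk.length_cons, Walk.length_transfer, ← hlen]; push_cast; rfl
  · simp [edist_eq_top_of_not_reachable hr]

section Degree

variable [Fintype V] [DecidableEq V]

lemma degree_edge (huv : u ≠ v) (w : V) :
    (edge u v).degree w = if w = u ∨ w = v then 1 else 0 := by
  rw [← card_neighborFinset_eq_degree]
  split_ifs with hw
  · rw [Finset.card_eq_one]
    refine ⟨if w = u then v else u, Finset.ext fun t => ?_⟩
    simp only [mem_neighborFinset, edge_adj, Finset.mem_singleton]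
    grind
  · rw [Finset.card_eq_zero]
    ext t
    simp only [mem_neighborFinset, edge_adj, Finset.notMem_empty]
    grind

variable [DecidableRel H.Adj]

lemma degree_sup_edge (huv : u ≠ v) (h : ¬H.Adj u v) (w : V) :
    (H ⊔ edge u v).degree w = H.degree w + if w = u ∨ w = v then 1 else 0 := by
  rw [← card_neighborFinset_eq_degree, neighborFinset_sup, Finset.card_union_of_disjoint
    (disjoint_neighborFinset_of_disjoint _ _ _ ((disjoint_edge H).mpr h)),
    card_neighborFinset_eq_degree, card_neighborFinset_eq_degree, degree_edge huv]

lemma degree_sdiff_edge_add (h : H.Adj u v) (w : V) :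
    (H \ edge u v).degree w + (if w = u ∨ w = v then 1 else 0) = H.degree w := by
  have hnadj : ¬(H \ edge u v).Adj u v := by simp [sdiff_adj, edge_adj, h.ne]
  convert (degree_sup_edge h.ne hnadj w).symm using 2
  rw [sdiff_sup_self, sup_edge_of_adj H h]

lemma degree_sdiff_of_le {G : SimpleGraph V} [DecidableRel G.Adj] (hGH : G ≤ H) (w : V) :
    (H \ G).degree w = H.degree w - G.degree w := by
  rw [← card_neighborFinset_eq_degree, neighborFinset_sdiff, Finset.card_sdiff_of_subset,
    card_neighborFinset_eq_degree, card_neighborFinset_eq_degree]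
  exact fun t ht => by simpa using hGH ((mem_neighborFinset _ _ _).mp ht)

lemma neighborSet_sdiff_subsingleton {G : SimpleGraph V} [DecidableRel G.Adj] (hGH : G ≤ H)
    {v : V} (hv : H.degree v ≤ G.degree v + 1) : ((H \ G).neighborSet v).Subsingleton := by
  rw [← coe_neighborFinset, ← Finset.card_le_one_iff_subsingleton,
    card_neighborFinset_eq_degree, degree_sdiff_of_le hGH]
  omega

lemma exists_sdiff_adj {G : SimpleGraph V} [DecidableRel G.Adj] (hGH : G ≤ H) {v : V}
    (hv : G.degree v < H.degree v) : ∃ w, (H \ G).Adj v w := by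
  rw [← degree_pos_iff_exists_adj, degree_sdiff_of_le hGH]
  omega

end Degree

lemma mem_ball_succ {G : SimpleGraph V} {c v : V} {k : ℕ} (hv : v ∈ G.ball c ↑(k + 1)) :
    v = c ∨ ∃ w, G.Adj c w ∧ v ∈ G.ball w k := by
  rw [mem_ball, edist_comm] at hv
  obtain ⟨p, hp⟩ := (reachable_of_edist_ne_top (ne_top_of_lt hv)).exists_walk_length_eq_edist
  cases p with
  | nil => exact Or.inl rfl
  | cons h q =>
    refine Or.inr ⟨_, h, ?_⟩
    rw [← hp, Walk.length_cons] at hv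
    have hq : q.length + 1 < k + 1 := by exact_mod_cast hv
    rw [mem_ball, edist_comm]
    exact (edist_le q).trans_lt (by exact_mod_cast Nat.succ_lt_succ_iff.mp hq)

lemma ncard_ball_lt [Fintype V] {G : SimpleGraph V} [DecidableRel G.Adj] {D : ℕ} (hD : 2 ≤ D)
    (hdeg : ∀ v, G.degree v ≤ D) (c : V) (k : ℕ) : (G.ball c k).ncard < D ^ k := by
  induction k generalizing c with
  | zero => simp
  | succ k ih =>
    have hsub : G.ball c ↑(k + 1) ⊆ insert c (⋃ w ∈ G.neighborFinset c, G.ball w k) := by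
      intro v hv
      rcases mem_ball_succ hv with rfl | ⟨w, hw, hvw⟩
      · exact Set.mem_insert _ _
      · exact Set.mem_insert_of_mem _ (Set.mem_biUnion (by simpa using hw) hvw)
    have hsum : ∑ w ∈ G.neighborFinset c, (G.ball w k).ncard ≤ D * (D ^ k - 1) := by
      calc _ ≤ ∑ w ∈ G.neighborFinset c, (D ^ k - 1) :=
            Finset.sum_le_sum fun w _ => Nat.le_sub_one_of_lt (ih w)
        _ ≤ D * (D ^ k - 1) := by
            rw [Finset.sum_const, smul_eq_mul, card_neighborFinset_eq_degree]
            exact Nat.mul_le_mul_right _ (hdeg c)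
    have hpow : D * (D ^ k - 1) + 1 < D ^ (k + 1) := by
      rw [Nat.mul_sub_one, pow_succ' D k]
      have : D ≤ D * D ^ k := Nat.le_mul_of_pos_right _ (by positivity)
      omega
    calc (G.ball c ↑(k + 1)).ncard
      _ ≤ (insert c (⋃ w ∈ G.neighborFinset c, G.ball w k)).ncard := Set.ncard_le_ncard hsub
      _ ≤ (⋃ w ∈ G.neighborFinset c, G.ball w k).ncard + 1 := Set.ncard_insert_le _ _
      _ ≤ D * (D ^ k - 1) + 1 := by
          gcongr; exact (Finset.set_ncard_biUnion_le _ _).trans hsum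
      _ < D ^ (k + 1) := hpow

lemma exists_adj_notMem_of_two_mul_card_lt [DecidableEq V] {M : SimpleGraph V}
    (hM : ∀ v, (M.neighborSet v).Subsingleton) {S F : Finset V}
    (hS : ∀ v ∈ S, ∃ w, M.Adj v w) (hSF : 2 * #F < #S) :
    ∃ a b, M.Adj a b ∧ a ∉ F ∧ b ∉ F := by
  by_contra! hcon
  have hSF' : #(S \ F) ≤ #F := by
    refine Finset.card_le_card_of_forall_subsingleton M.Adj (fun a ha => ?_)
      fun b _ a₁ ha₁ a₂ ha₂ => hM b ha₁.2.symm ha₂.2.symm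
    obtain ⟨w, hw⟩ := hS a (Finset.mem_sdiff.mp ha).1
    exact ⟨w, hcon a w hw (Finset.mem_sdiff.mp ha).2, hw⟩
  have := Finset.card_le_card_sdiff_add_card (s := S) (t := F)
  omega

lemma even_card_degree_eq [Fintype V] [DecidableRel H.Adj] {r : ℕ}
    (hV : Even (Fintype.card V)) (h : ∀ v, H.degree v = r ∨ H.degree v = r + 1) :
    Even #{v | H.degree v = r} := by
  have hsum : ∑ v, (H.degree v + if H.degree v = r then 1 else 0) = Fintype.card V * (r + 1) := by
    rw [Fintype.card_eq_sum_ones, Finset.sum_mul, one_mul]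
    exact Finset.sum_congr rfl fun v _ => by rcases h v with h | h <;> simp [h]
  rw [Finset.sum_add_distrib, sum_degrees_eq_twice_card_edges, Finset.sum_boole,
    Nat.cast_id] at hsum
  have := hV.mul_right (r + 1)
  rw [← hsum, Nat.even_add] at this
  exact this.mp (even_two_mul _)

lemma exists_ne_degree_eq [Fintype V] [DecidableRel H.Adj] (hV : Even (Fintype.card V)) {r : ℕ}
    (hr : ∀ v, H.degree v = r ∨ H.degree v = r + 1) {x : V} (hx : H.degree x = r) :
    ∃ y, y ≠ x ∧ H.degree y = r := by
  have hpos : 0 < #{v | H.degree v = r} := Finset.card_pos.mpr ⟨x, by simpa using hx⟩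
  obtain ⟨y, hy, hyx⟩ := Finset.exists_mem_ne
    (by have := even_card_degree_eq hV hr; grind : 1 < #{v | H.degree v = r}) x
  exact ⟨y, hyx, by simpa using hy⟩

lemma le_egirth_sdiff_edge_sup_edge_sup_edge {g : ℕ∞} {a b x y : V} (hab : H.Adj a b)
    (hH : g ≤ H.egirth) (hxa : g ≤ H.edist x a + 1) (hxb : g ≤ H.edist x b + 1)
    (hyb : g ≤ H.edist y b + 1) :
    g ≤ (H \ edge a b ⊔ edge x a ⊔ edge y b).egirth := by
  have h₁ : g ≤ (H \ edge a b ⊔ edge x a).egirth :=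
    (le_min (hH.trans (egirth_anti sdiff_le)) (hxa.trans (by gcongr; exact sdiff_le))).trans
      min_egirth_edist_le_egirth_sup_edge
  have h₂ : g ≤ (H \ edge a b ⊔ edge x a).edist y b + 1 := by
    grw [← min_edist_le_edist_sup_edge, ← min_add_add_right, ← min_add_add_right]
    refine le_min (hyb.trans (by gcongr; exact sdiff_le)) (le_min ?_ ?_)
    · calc g ≤ H.egirth := hH
        _ ≤ (H \ edge a b).edist a b + 1 := egirth_le_edist_sdiff_edge_add_one hab
        _ ≤ _ := by gcongr ?_ + 1; exact le_add_self
    · calc g ≤ (H \ edge a b).edist x b + 1 := hxb.trans (by gcongr; exact sdiff_le)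
        _ ≤ _ := by gcongr ?_ + 1; exact le_add_self
  exact (le_min h₁ h₂).trans min_egirth_edist_le_egirth_sup_edge

lemma notMem_ball_iff {c v : V} {g : ℕ} (hg : 1 ≤ g) :
    v ∉ H.ball c ↑(g - 1) ↔ (g : ℕ∞) ≤ H.edist c v + 1 := by
  obtain ⟨k, rfl⟩ := Nat.exists_eq_add_of_le' hg
  rw [mem_ball, not_lt, edist_comm, Nat.add_sub_cancel, Nat.cast_add, Nat.cast_one]
  exact (ENat.add_le_add_iff_right ENat.one_ne_top).symm

lemma ne_and_not_adj_of_le_edist_add_one {g : ℕ} (hg : 3 ≤ g) {u v : V}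
    (h : (g : ℕ∞) ≤ H.edist u v + 1) : u ≠ v ∧ ¬H.Adj u v := by
  refine ⟨fun huv => ?_, fun hadj => ?_⟩
  · rw [huv, edist_self, zero_add] at h
    exact absurd (by exact_mod_cast h : g ≤ 1) (by omega)
  · rw [edist_eq_one_iff_adj.mpr hadj] at h
    exact absurd (by exact_mod_cast h : g ≤ 1 + 1) (by omega)

section Construction

variable [Fintype V] [DecidableEq V] {G : SimpleGraph V} [DecidableRel G.Adj] [DecidableRel H.Adj]

lemma degree_sdiff_edge_sup_edge_sup_edge {a b x y : V} (hab : H.Adj a b)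
    (hxa : ¬H.Adj x a) (hyb : ¬H.Adj y b) (hxy : x ≠ y) (hax : a ≠ x) (hay : a ≠ y) (hbx : b ≠ x)
    (hby : b ≠ y) (w : V) :
    (H \ edge a b ⊔ edge x a ⊔ edge y b).degree w =
      H.degree w + if w = x ∨ w = y then 1 else 0 := by
  have h₀ : ¬(H \ edge a b).Adj x a := fun h => hxa (sdiff_le (a := H) h)
  have h₁ : ¬(H \ edge a b ⊔ edge x a).Adj y b := by
    simp only [sup_adj, sdiff_adj, edge_adj]
    grind
  have := degree_sdiff_edge_add hab w
  have := hab.ne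
  rw [degree_sup_edge hby.symm h₁, degree_sup_edge hax.symm h₀]
  split_ifs at * <;> grind

lemma exists_sdiff_adj_notMem_ball {g d r : ℕ} (hg : 1 ≤ g) (hd : 2 ≤ d) (hrd : r < d)
    (hn : 4 * d ^ g ≤ Fintype.card V) (hG : G.IsRegularOfDegree r) (hGH : G ≤ H)
    (hdeg : ∀ v, H.degree v ≤ r + 1) {x : V}
    (hU : ∀ v, H.degree v ≠ r + 1 → v ∈ H.ball x ↑(g - 1)) (y : V) :
    ∃ a b, (H \ G).Adj a b ∧ a ∉ H.ball x ↑(g - 1) ∪ H.ball y ↑(g - 1) ∧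
      b ∉ H.ball x ↑(g - 1) ∪ H.ball y ↑(g - 1) := by
  classical
  set B := H.ball x ↑(g - 1) ∪ H.ball y ↑(g - 1) with hBdef
  have hball : ∀ c, (H.ball c ↑(g - 1)).ncard < d ^ (g - 1) :=
    fun c => ncard_ball_lt hd (fun v => (hdeg v).trans hrd) c _
  have hB : #B.toFinset + 2 ≤ 2 * d ^ (g - 1) := by
    rw [← Set.ncard_eq_toFinset_card']
    have := Set.ncard_union_le (H.ball x ↑(g - 1)) (H.ball y ↑(g - 1))
    rw [← hBdef] at this
    have := hball x
    have := hball y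
    omega
  have hU' : #{v | ¬H.degree v = r + 1} < d ^ (g - 1) := by
    refine lt_of_le_of_lt ?_ (hball x)
    rw [Set.ncard_eq_toFinset_card']
    exact Finset.card_le_card fun v hv => by simpa using hU v (by simpa using hv)
  have hsplit := Finset.card_filter_add_card_filter_not (s := Finset.univ)
    (fun v => H.degree v = r + 1)
  have hpow : 8 * d ^ (g - 1) ≤ Fintype.card V := by
    calc 8 * d ^ (g - 1) ≤ 4 * (d * d ^ (g - 1)) := by nlinarith
      _ = 4 * d ^ g := by rw [← pow_succ', Nat.sub_add_cancel hg]
      _ ≤ _ := hn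
  obtain ⟨a, b, hab, ha, hb⟩ := exists_adj_notMem_of_two_mul_card_lt (M := H \ G)
    (fun v => neighborSet_sdiff_subsingleton hGH (by rw [hG v]; exact hdeg v))
    (S := {v | H.degree v = r + 1}) (F := B.toFinset)
    (fun v hv => exists_sdiff_adj hGH (by rw [hG v, (Finset.mem_filter_univ _).mp hv]; omega))
    (by rw [Finset.card_univ] at hsplit; omega)
  exact ⟨a, b, hab, by simpa using ha, by simpa using hb⟩

lemma exists_pair_augmentation {g d r : ℕ} (hg : 3 ≤ g) (hd : 2 ≤ d) (hrd : r < d)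
    (hn : 4 * d ^ g ≤ Fintype.card V) (hV : Even (Fintype.card V)) (hG : G.IsRegularOfDegree r)
    (hGH : G ≤ H) (hH : (g : ℕ∞) ≤ H.egirth) (hdeg : ∀ v, H.degree v ≤ r + 1) {x : V}
    (hx : H.degree x = r) :
    ∃ y, y ≠ x ∧ H.degree y = r ∧ ∃ H' : SimpleGraph V, ∃ _ : DecidableRel H'.Adj,
      G ≤ H' ∧ (g : ℕ∞) ≤ H'.egirth ∧
        ∀ w, H'.degree w = H.degree w + if w = x ∨ w = y then 1 else 0 := by
  have hr : ∀ v, H.degree v = r ∨ H.degree v = r + 1 := fun v => by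
    have := hG v ▸ degree_le_of_le (v := v) hGH
    have := hdeg v
    omega
  have far := fun {u v : V} => ne_and_not_adj_of_le_edist_add_one (H := H) (u := u) (v := v) hg
  by_cases hfar : ∃ y, H.degree y = r ∧ (g : ℕ∞) ≤ H.edist x y + 1
  · obtain ⟨y, hy, hxy⟩ := hfar
    exact ⟨y, (far hxy).1.symm, hy, H ⊔ edge x y, inferInstance, le_sup_of_le_left hGH,
      (le_min hH hxy).trans min_egirth_edist_le_egirth_sup_edge,
      degree_sup_edge (far hxy).1 (far hxy).2⟩
  push Not at hfar
  obtain ⟨y, hyx, hy⟩ := exists_ne_degree_eq hV hr hx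
  have hU : ∀ v, H.degree v ≠ r + 1 → v ∈ H.ball x ↑(g - 1) := fun v hv => by
    by_contra hvx
    exact (hfar v ((hr v).resolve_right hv)).not_ge ((notMem_ball_iff (by omega)).mp hvx)
  obtain ⟨a, b, hab, ha, hb⟩ :=
    exists_sdiff_adj_notMem_ball (by omega) hd hrd hn hG hGH hdeg hU y
  simp only [Set.mem_union, not_or, notMem_ball_iff (by omega : 1 ≤ g)] at ha hb
  rw [sdiff_adj] at hab
  refine ⟨y, hyx, hy, H \ edge a b ⊔ edge x a ⊔ edge y b, inferInstance,
    le_sup_of_le_left (le_sup_of_le_left (le_sdiff.mpr ⟨hGH, (disjoint_edge G).mpr hab.2⟩)),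
    le_egirth_sdiff_edge_sup_edge_sup_edge hab.1 hH ha.1 hb.1 hb.2,
    degree_sdiff_edge_sup_edge_sup_edge hab.1 (far ha.1).2 (far hb.2).2 hyx.symm
      (far ha.1).1.symm (far ha.2).1.symm (far hb.1).1.symm (far hb.2).1.symm⟩

lemma card_degree_ne_lt {H' : SimpleGraph V} [DecidableRel H'.Adj] {r : ℕ} {x y : V}
    (hx : H.degree x = r) (hy : H.degree y = r)
    (hH' : ∀ w, H'.degree w = H.degree w + if w = x ∨ w = y then 1 else 0) :
    #{v | H'.degree v ≠ r + 1} < #{v | H.degree v ≠ r + 1} := by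
  refine Finset.card_lt_card ((Finset.ssubset_iff_of_subset fun v hv => ?_).mpr ⟨x, ?_, ?_⟩)
  · simp only [Finset.mem_filter, Finset.mem_univ, true_and, hH'] at hv ⊢
    split_ifs at hv with hvxy
    · rcases hvxy with rfl | rfl <;> omega
    · simpa using hv
  · simp [hx]
  · simp [hH', hx]

lemma exists_isRegularOfDegree_succ {g d r : ℕ} (hg : 3 ≤ g) (hd : 2 ≤ d) (hrd : r < d)
    (hn : 4 * d ^ g ≤ Fintype.card V) (hV : Even (Fintype.card V)) (hG : G.IsRegularOfDegree r)
    (hGH : G ≤ H) (hH : (g : ℕ∞) ≤ H.egirth) (hdeg : ∀ v, H.degree v ≤ r + 1) :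
    ∃ H' : SimpleGraph V, ∃ _ : DecidableRel H'.Adj,
      H'.IsRegularOfDegree (r + 1) ∧ (g : ℕ∞) ≤ H'.egirth := by
  induction hk : #{v | H.degree v ≠ r + 1} using Nat.strong_induction_on generalizing H with
  | _ k ih =>
    by_cases hreg : H.IsRegularOfDegree (r + 1)
    · exact ⟨H, inferInstance, hreg, hH⟩
    obtain ⟨x, hx⟩ : ∃ x, H.degree x ≠ r + 1 := by simpa [IsRegularOfDegree] using hreg
    have hx : H.degree x = r := by
      have := hG x ▸ degree_le_of_le (v := x) hGH
      have := hdeg x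
      omega
    obtain ⟨y, -, hy, H', _, hGH', hH', hdeg'⟩ :=
      exists_pair_augmentation hg hd hrd hn hV hG hGH hH hdeg hx
    refine ih _ (hk ▸ card_degree_ne_lt hx hy hdeg') hGH' hH' (fun w => ?_) rfl
    rw [hdeg' w]
    split_ifs with hw
    · rcases hw with rfl | rfl <;> omega
    · simpa using hdeg w

end Construction

lemma exists_isRegularOfDegree_le_egirth [Fintype V] [DecidableEq V] {g d : ℕ} (hg : 3 ≤ g)
    (hd : 2 ≤ d) (hn : 4 * d ^ g ≤ Fintype.card V) (hV : Even (Fintype.card V)) {r : ℕ}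
    (hr : r ≤ d) :
    ∃ G : SimpleGraph V, ∃ _ : DecidableRel G.Adj,
      G.IsRegularOfDegree r ∧ (g : ℕ∞) ≤ G.egirth := by
  induction r with
  | zero => exact ⟨⊥, inferInstance, IsRegularOfDegree.bot, by simp⟩
  | succ r ih =>
    obtain ⟨G, _, hG, hGg⟩ := ih (by omega)
    exact exists_isRegularOfDegree_succ hg hd hr hn hV hG le_rfl hGg fun v => by rw [hG v]; omega

end SimpleGraph

/-- (Erdős–Sachs) For any integers `g ≥ 3`, `d ≥ 2` and any even integer `n ≥ 4·d^g`,
there exists an `n`-vertex `d`-regular graph with girth at least `g`. -/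
theorem exists_regular_graph_of_large_girth (g d n : ℕ) (hg : 3 ≤ g) (hd : 2 ≤ d)
    (hn : 4 * d ^ g ≤ n) (heven : Even n) :
    ∃ G : SimpleGraph (Fin n), ∃ _ : DecidableRel G.Adj,
      G.IsRegularOfDegree d ∧ (g : ℕ∞) ≤ G.egirth :=
  SimpleGraph.exists_isRegularOfDegree_le_egirth hg hd (by simpa using hn) (by simpa using heven)
    le_rfl
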